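/- arXiv:1407.6134 — 3 statements merged into one kernel-verified Lean document; each statement's English description precedes it below -/
import Mathlib

section
/- Let 𝐰 = (w, g) ∈ 𝒲^G and suppose h ∈ G and k with 0 < k < n_w satisfy h·σ_L^k 𝐰 = 𝐰, where k does not divide n_w and G acts freely on 𝒲^G. Then 𝐰 is composite: there exist 𝐯 ∈ 𝒲^G with word length c = gcd(k, n_w) and t = n_w / c ≥ 2 such that 𝐰 = 𝐯^t. -/
/-- Pairs of a word of length `n_w = n+1` (letters indexed by `Fin (n+2)`) and a
group element. -/
abbrev GWord (S G : Type*) : Type _ := (Σ n : ℕ, Fin (n + 2) → S) × G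

/-- The set `𝒲^G` of admissible `G`-closed words with closing element. -/
def WG {S G : Type*} [Group G] [MulAction G S] (A : S → S → Prop) :
    Set (GWord S G) :=
  {p | (∀ k : Fin (p.1.1 + 1), A (p.1.2 k.castSucc) (p.1.2 k.succ)) ∧
    p.2 • p.1.2 (Fin.last (p.1.1 + 1)) = p.1.2 0}

/-- The `G`-action `h • (w,g) = (hw, hgh⁻¹)` on `𝒲^G`. -/
def act {S G : Type*} [Group G] [MulAction G S] (h : G) (p : GWord S G) :
    GWord S G :=
  (⟨p.1.1, fun i => h • p.1.2 i⟩, h * p.2 * h⁻¹)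

/-- The left shift `σ_L (w, g) = ((w₁, …, w_n, g⁻¹ w₁), g)`. -/
def sigmaL {S G : Type*} [Group G] [MulAction G S] (p : GWord S G) : GWord S G :=
  (⟨p.1.1, fun i =>
      if h : (i : ℕ) < p.1.1 + 1 then p.1.2 ⟨(i : ℕ) + 1, by omega⟩
      else p.2⁻¹ • p.1.2 1⟩, p.2)

/-- The right shift `σ_R (w, g) = ((g w_{n-1}, w₀, …, w_{n-1}), g)`. -/
def sigmaR {S G : Type*} [Group G] [MulAction G S] (p : GWord S G) : GWord S G :=
  (⟨p.1.1, fun i =>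
      if (i : ℕ) = 0 then p.2 • p.1.2 ⟨p.1.1, by omega⟩
      else p.1.2 ⟨(i : ℕ) - 1, Nat.lt_of_le_of_lt (Nat.sub_le _ _) i.isLt⟩⟩, p.2)

/-- `gpow p k` is the `(k+1)`-fold iterate `𝐰^{k+1}` of `𝐰 = (w, g)`. -/
def gpow {S G : Type*} [Group G] [MulAction G S] (p : GWord S G) (k : ℕ) :
    GWord S G :=
  (⟨k * (p.1.1 + 1) + p.1.1, fun i =>
      if (i : ℕ) = 0 then p.2 ^ k • p.1.2 0
      else p.2 ^ (k - ((i : ℕ) - 1) / (p.1.1 + 1)) •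
        p.1.2 ⟨(i : ℕ) - ((i : ℕ) - 1) / (p.1.1 + 1) * (p.1.1 + 1), by
          have h1 : ((i : ℕ) - 1) % (p.1.1 + 1) < p.1.1 + 1 :=
            Nat.mod_lt _ (Nat.succ_pos _)
          have h2 : ((i : ℕ) - 1) / (p.1.1 + 1) * (p.1.1 + 1) +
              ((i : ℕ) - 1) % (p.1.1 + 1) = (i : ℕ) - 1 := Nat.div_add_mod' _ _
          omega⟩⟩,
   p.2 ^ (k + 1))

/-- `p` is composite if it is a `k`-fold iterate, `k ≥ 2`, of an element of `𝒲^G`. -/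
def IsComposite {S G : Type*} [Group G] [MulAction G S] (A : S → S → Prop)
    (p : GWord S G) : Prop :=
  ∃ q ∈ WG (G := G) A, ∃ k : ℕ, 1 ≤ k ∧ p = gpow q k

/-- The `ℤ`-action on `𝒲^G` by powers of the left shift. -/
def zshift {S G : Type*} [Group G] [MulAction G S] (m : ℤ) (p : GWord S G) :
    GWord S G :=
  if 0 ≤ m then sigmaL^[m.toNat] p else sigmaR^[(-m).toNat] p

/-- The `G × ℤ` action on `𝒲^G`. -/
def fullAct {S G : Type*} [Group G] [MulAction G S] (q : G × ℤ) (p : GWord S G) :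
    GWord S G :=
  act q.1 (zshift q.2 p)

section Aux

variable {S G : Type*} [Group G] [MulAction G S]

/-- Periodic extension of a closed word. -/
def Wext (n : ℕ) (w : Fin (n + 2) → S) (g : G) (i : ℕ) : S :=
  (g⁻¹) ^ (i / (n + 1)) • w ⟨i % (n + 1), Nat.lt_succ_of_lt (Nat.mod_lt _ (Nat.succ_pos n))⟩

lemma smul_w_congr (n : ℕ) (w : Fin (n + 2) → S) (g : G) (da db a b : ℕ)
    (hd : da = db) (hab : a = b) (ha : a < n + 2) (hb : b < n + 2) :
    (g⁻¹) ^ da • w ⟨a, ha⟩ = (g⁻¹) ^ db • w ⟨b, hb⟩ := by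
  subst hd hab; rfl

lemma Wext_spec (n : ℕ) (w : Fin (n + 2) → S) (g : G) (j r : ℕ) (hr : r < n + 1) :
    Wext n w g (r + j * (n + 1)) = (g⁻¹) ^ j • w ⟨r, by omega⟩ := by
  have h1 : (r + j * (n + 1)) / (n + 1) = j := by
    rw [Nat.add_mul_div_right _ _ (Nat.succ_pos n), Nat.div_eq_of_lt hr, Nat.zero_add]
  have h2 : (r + j * (n + 1)) % (n + 1) = r := by
    rw [Nat.add_mul_mod_self_right, Nat.mod_eq_of_lt hr]
  exact smul_w_congr n w g _ _ _ _ h1 h2 _ _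

lemma Wext_period (n : ℕ) (w : Fin (n + 2) → S) (g : G) (i : ℕ) :
    Wext n w g (i + (n + 1)) = g⁻¹ • Wext n w g i := by
  have hpf : i % (n + 1) < n + 2 := Nat.lt_succ_of_lt (Nat.mod_lt _ (Nat.succ_pos n))
  have h3 : g⁻¹ • Wext n w g i = g⁻¹ ^ (i / (n + 1) + 1) • w ⟨i % (n + 1), hpf⟩ := by
    show g⁻¹ • ((g⁻¹) ^ (i / (n + 1)) • w ⟨i % (n + 1), _⟩) = _
    rw [← mul_smul, ← pow_succ']
  rw [h3]
  exact smul_w_congr n w g _ _ _ _ (Nat.add_div_right i (Nat.succ_pos n))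
    (Nat.add_mod_right _ _) _ _

lemma Wext_eq (n : ℕ) (w : Fin (n + 2) → S) (g : G)
    (hclose : g • w (Fin.last (n + 1)) = w 0) (i : ℕ) (hi : i < n + 2) :
    Wext n w g i = w ⟨i, hi⟩ := by
  rcases Nat.lt_or_ge i (n + 1) with hlt | hge
  · have := Wext_spec n w g 0 i hlt
    simpa using this
  · have hie : i = (n + 1) := by omega
    subst hie
    have := Wext_spec n w g 1 0 (Nat.succ_pos n)
    simp only [Nat.zero_add, one_mul, pow_one] at this
    rw [this]
    have h0 : g⁻¹ • w 0 = w (Fin.last (n + 1)) := by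
      rw [inv_smul_eq_iff, hclose]
    have hz : (⟨0, by omega⟩ : Fin (n + 2)) = 0 := Fin.ext (by simp)
    rw [hz, h0]
    rfl

lemma Wext_adj (A : S → S → Prop)
    (hpres : ∀ (g : G) (i j : S), A i j → A (g • i) (g • j))
    (n : ℕ) (w : Fin (n + 2) → S) (g : G)
    (hadj : ∀ j : Fin (n + 1), A (w j.castSucc) (w j.succ))
    (hclose : g • w (Fin.last (n + 1)) = w 0) :
    ∀ i : ℕ, A (Wext n w g i) (Wext n w g (i + 1)) := by
  suffices H : ∀ d r : ℕ, r < n + 1 →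
      A (Wext n w g (r + d * (n + 1))) (Wext n w g ((r + d * (n + 1)) + 1)) by
    intro i
    have := H (i / (n + 1)) (i % (n + 1)) (Nat.mod_lt _ (Nat.succ_pos n))
    rwa [Nat.mod_add_div' i (n + 1)] at this
  intro d r hr
  rcases Nat.lt_or_ge r n with hcase | hcase
  · have e : (r + d * (n + 1)) + 1 = (r + 1) + d * (n + 1) := by ring
    rw [e, Wext_spec n w g d r hr, Wext_spec n w g d (r + 1) (by omega)]
    apply hpres
    exact hadj ⟨r, by omega⟩
  · have hrn : r = n := by omega
    have e : (r + d * (n + 1)) + 1 = 0 + (d + 1) * (n + 1) := by rw [hrn]; ring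
    rw [e, Wext_spec n w g d r hr, Wext_spec n w g (d + 1) 0 (Nat.succ_pos n)]
    rw [pow_succ, mul_smul]
    have h0 : g⁻¹ • w ⟨0, by omega⟩ = w ⟨r + 1, by omega⟩ := by
      have hz : (⟨0, by omega⟩ : Fin (n + 2)) = 0 := Fin.ext (by simp)
      have hl : (⟨r + 1, by omega⟩ : Fin (n + 2)) = Fin.last (n + 1) :=
        Fin.ext (by simp [hrn])
      rw [hz, hl, inv_smul_eq_iff, hclose]
    rw [h0]
    exact hpres _ _ _ (hadj ⟨r, hr⟩)

lemma sigma_ext {m₁ m₂ : ℕ} (h : m₁ = m₂) (f₁ : Fin (m₁ + 2) → S) (f₂ : Fin (m₂ + 2) → S)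
    (hf : ∀ (i : ℕ) (hi : i < m₁ + 2), f₁ ⟨i, hi⟩ = f₂ ⟨i, by omega⟩) :
    (⟨m₁, f₁⟩ : Σ n, Fin (n + 2) → S) = ⟨m₂, f₂⟩ := by
  subst h
  congr 1
  funext i
  exact hf i.val i.isLt

lemma sigmaL_iter (n : ℕ) (w : Fin (n + 2) → S) (g : G)
    (hclose : g • w (Fin.last (n + 1)) = w 0) (j : ℕ) :
    sigmaL^[j] ((⟨⟨n, w⟩, g⟩ : GWord S G)) =
      ((⟨n, fun i => Wext n w g ((i : ℕ) + j)⟩ : Σ m, Fin (m + 2) → S), g) := by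
  induction j with
  | zero =>
    simp only [Function.iterate_zero, id_eq]
    have S1 : (⟨n, w⟩ : Σ m, Fin (m + 2) → S) = ⟨n, fun i => Wext n w g ((i : ℕ) + 0)⟩ := by
      refine sigma_ext rfl _ _ (fun i hi => ?_)
      exact (Wext_eq n w g hclose i hi).symm
    exact congrArg (fun x => (x, g)) S1
  | succ j ih =>
    rw [Function.iterate_succ_apply', ih]
    unfold sigmaL
    refine congrArg (fun x => (x, g)) ?_
    refine sigma_ext rfl _ _ (fun i hi => ?_)
    have hi' : i < n + 2 := hi
    show (if _ : i < n + 1 then Wext n w g ((i + 1) + j)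
        else g⁻¹ • Wext n w g (((1 : Fin (n + 2)) : ℕ) + j))
      = Wext n w g (i + (j + 1))
    rcases Nat.lt_or_ge i (n + 1) with hlt | hge
    · rw [dif_pos hlt]
      exact congrArg (Wext n w g) (by omega)
    · rw [dif_neg (by omega)]
      have hv1 : ((1 : Fin (n + 2)) : ℕ) = 1 := by simp
      rw [hv1]
      have e : i + (j + 1) = (1 + j) + (n + 1) := by omega
      rw [e, Wext_period]

/-- The shift-stabilizer predicate. -/
def ShiftP (g : G) (W : ℕ → S) (j : ℕ) : Prop :=
  ∃ u : G, Commute u g ∧ ∀ i : ℕ, u • W (i + j) = W i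

lemma shiftP_add (g : G) (W : ℕ → S) (a b : ℕ)
    (ha : ShiftP g W a) (hb : ShiftP g W b) : ShiftP g W (a + b) := by
  obtain ⟨x, hx, hxW⟩ := ha
  obtain ⟨y, hy, hyW⟩ := hb
  refine ⟨x * y, hx.mul_left hy, fun i => ?_⟩
  rw [mul_smul, ← Nat.add_assoc, hyW (i + a), hxW i]

lemma shiftP_sub (g : G) (W : ℕ → S) (a b : ℕ)
    (hab : ShiftP g W (a + b)) (hb : ShiftP g W b) : ShiftP g W a := by
  obtain ⟨x, hx, hxW⟩ := hab
  obtain ⟨y, hy, hyW⟩ := hb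
  refine ⟨x * y⁻¹, hx.mul_left hy.inv_left, fun i => ?_⟩
  have h1 : y • W ((i + a) + b) = W (i + a) := hyW (i + a)
  have h2 : x • W (i + (a + b)) = W i := hxW i
  rw [← Nat.add_assoc] at h2
  have h3 : y⁻¹ • W (i + a) = W (i + a + b) := by rw [inv_smul_eq_iff, h1]
  rw [mul_smul, h3, h2]

lemma shiftP_mul (g : G) (W : ℕ → S) (m : ℕ) (hm : ShiftP g W m) (q : ℕ) :
    ShiftP g W (q * m) := by
  induction q with
  | zero => exact ⟨1, Commute.one_left g, fun i => by simp⟩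
  | succ q ih =>
    have := shiftP_add g W (q * m) m ih hm
    rwa [← Nat.succ_mul] at this

lemma shiftP_gcd (g : G) (W : ℕ → S) (a b : ℕ) :
    ShiftP g W a → ShiftP g W b → ShiftP g W (Nat.gcd a b) := by
  induction a, b using Nat.gcd.induction with
  | H0 b => intro _ hb; simpa using hb
  | H1 a b ha ih =>
    intro hPa hPb
    rw [Nat.gcd_rec]
    refine ih ?_ hPa
    refine shiftP_sub g W (b % a) (b / a * a) ?_ (shiftP_mul g W a hPa (b / a))
    rw [Nat.mod_add_div']
    exact hPb

end Aux

/-- Key step in the proof of Lemma 4.4: if `G` acts freely on `𝒲^G` and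
`h · σ_L^k 𝐰 = 𝐰` for some `0 < k < n_w` with `k ∤ n_w`, then `𝐰` is composite:
`𝐰 = 𝐯^t` with `n_𝐯 = gcd(k, n_w)` and `t = n_w / gcd(k, n_w) ≥ 2`. -/
theorem shift_stabilizer_nondivisor_implies_composite
    {S G : Type*} [Group G] [MulAction G S] (A : S → S → Prop)
    (hpres : ∀ (g : G) (i j : S), A i j → A (g • i) (g • j))
    (hfree : ∀ (h : G), ∀ p ∈ WG (G := G) A, act h p = p → h = 1)
    (p : GWord S G) (hp : p ∈ WG (G := G) A)
    (h : G) (k : ℕ) (hk0 : 0 < k) (hklt : k < p.1.1 + 1)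
    (hndvd : ¬ k ∣ (p.1.1 + 1))
    (hstab : act h (sigmaL^[k] p) = p) :
    ∃ q ∈ WG (G := G) A, q.1.1 + 1 = Nat.gcd k (p.1.1 + 1) ∧
      ∃ t : ℕ, t = (p.1.1 + 1) / Nat.gcd k (p.1.1 + 1) ∧ 2 ≤ t ∧
        p = gpow q (t - 1) := by
  obtain ⟨⟨n, w⟩, g⟩ := p
  have hadj : ∀ j : Fin (n + 1), A (w j.castSucc) (w j.succ) := hp.1
  have hclose : g • w (Fin.last (n + 1)) = w 0 := hp.2
  have hklt' : k < n + 1 := hklt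
  show ∃ q ∈ WG (G := G) A, q.1.1 + 1 = Nat.gcd k (n + 1) ∧
      ∃ t : ℕ, t = (n + 1) / Nat.gcd k (n + 1) ∧ 2 ≤ t ∧
        (⟨⟨n, w⟩, g⟩ : GWord S G) = gpow q (t - 1)
  set W : ℕ → S := Wext n w g with hWdef
  have hWeq : ∀ (i : ℕ) (hi : i < n + 2), W i = w ⟨i, hi⟩ := Wext_eq n w g hclose
  have hWper : ∀ i, W (i + (n + 1)) = g⁻¹ • W i := Wext_period n w g
  have hWadj : ∀ i, A (W i) (W (i + 1)) := Wext_adj A hpres n w g hadj hclose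
  -- extract the stabilizer equation
  rw [sigmaL_iter n w g hclose k] at hstab
  unfold act at hstab
  rw [Prod.mk.injEq] at hstab
  obtain ⟨hfst, hsnd⟩ := hstab
  have hcomm : Commute h g := mul_inv_eq_iff_eq_mul.mp hsnd
  have hW0 : ∀ i : Fin (n + 2), h • W ((i : ℕ) + k) = w i :=
    fun i => congrFun (sigma_mk_injective hfst) i
  have hhW : ∀ i : ℕ, h • W (i + k) = W i := by
    intro i
    induction i using Nat.strong_induction_on with
    | _ i ih =>
      rcases Nat.lt_or_ge i (n + 2) with hi | hi
      · rw [hWeq i hi]; exact hW0 ⟨i, hi⟩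
      · have e1 : i + k = ((i - (n + 1)) + k) + (n + 1) := by omega
        have e2 : i = (i - (n + 1)) + (n + 1) := by omega
        rw [e1, hWper]
        conv_rhs => rw [e2]
        rw [hWper, ← ih (i - (n + 1)) (by omega), smul_smul, smul_smul]
        congr 1
        exact hcomm.inv_right.eq
  obtain ⟨c, hcdef⟩ : ∃ c, c = Nat.gcd k (n + 1) := ⟨_, rfl⟩
  have hc1 : 0 < c := by rw [hcdef]; exact Nat.gcd_pos_of_pos_left _ hk0
  have hcdvdk : c ∣ k := by rw [hcdef]; exact Nat.gcd_dvd_left _ _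
  have hcdvdN : c ∣ (n + 1) := by rw [hcdef]; exact Nat.gcd_dvd_right _ _
  obtain ⟨u, hucomm, huW⟩ : ShiftP g W c := by
    rw [hcdef]
    refine shiftP_gcd g W k (n + 1) ⟨h, hcomm, hhW⟩ ⟨g, Commute.refl g, fun i => ?_⟩
    rw [hWper, smul_inv_smul]
  obtain ⟨t, htdef⟩ : ∃ t, t = (n + 1) / c := ⟨_, rfl⟩
  have htc : t * c = n + 1 := by rw [htdef]; exact Nat.div_mul_cancel hcdvdN
  have hcle : c ≤ n + 1 := Nat.le_of_dvd (Nat.succ_pos n) hcdvdN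
  have ht2 : 2 ≤ t := by
    by_contra hcon
    have h01 : t = 0 ∨ t = 1 := by omega
    rcases h01 with h01 | h01
    · rw [h01, Nat.zero_mul] at htc; omega
    · rw [h01, one_mul] at htc
      have : n + 1 ≤ k := Nat.le_of_dvd hk0 (by rw [← htc]; exact hcdvdk)
      omega
  have hupow : ∀ s i : ℕ, u ^ s • W (i + s * c) = W i := by
    intro s
    induction s with
    | zero => intro i; simp
    | succ s ih =>
      intro i
      have e : i + (s + 1) * c = (i + c) + s * c := by ring
      rw [e, pow_succ', mul_smul, ih (i + c), huW i]
  have hcc : c - 1 + 1 = c := by omega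
  have hut : u ^ t = g := by
    have hx : Commute (u ^ t * g⁻¹) g :=
      (hucomm.pow_left t).mul_left (Commute.refl g).inv_left
    have hlet : ∀ i : Fin (n + 2), (u ^ t * g⁻¹) • w i = w i := by
      intro i
      rw [← hWeq (i : ℕ) i.isLt, mul_smul]
      have h4 : g⁻¹ • W (i : ℕ) = W ((i : ℕ) + t * c) := by
        rw [htc, hWper]
      rw [h4, hupow t (i : ℕ)]
    have hact : act (u ^ t * g⁻¹) (⟨⟨n, w⟩, g⟩ : GWord S G) = (⟨⟨n, w⟩, g⟩ : GWord S G) := by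
      show ((⟨n, fun i => (u ^ t * g⁻¹) • w i⟩ : Σ m, Fin (m + 2) → S),
        (u ^ t * g⁻¹) * g * (u ^ t * g⁻¹)⁻¹) = ((⟨n, w⟩ : Σ m, Fin (m + 2) → S), g)
      have h6 : (fun i => (u ^ t * g⁻¹) • w i) = w := funext hlet
      have h7 : (u ^ t * g⁻¹) * g * (u ^ t * g⁻¹)⁻¹ = g := by
        rw [hx.eq, mul_inv_cancel_right]
      rw [h6, h7]
    have := hfree _ _ hp hact
    rwa [mul_inv_eq_one] at this
  refine ⟨((⟨c - 1, fun j => W ((t - 1) * c + (j : ℕ))⟩ : Σ m, Fin (m + 2) → S), u),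
    ⟨?_, ?_⟩, ?_, t, ?_, ht2, ?_⟩
  · -- adjacency of q
    intro j
    show A (W ((t - 1) * c + ((j.castSucc : Fin (c - 1 + 2)) : ℕ)))
      (W ((t - 1) * c + ((j.succ : Fin (c - 1 + 2)) : ℕ)))
    simp only [Fin.coe_castSucc, Fin.val_succ]
    rw [← Nat.add_assoc]
    exact hWadj _
  · -- closing of q
    show u • W ((t - 1) * c + ((Fin.last (c - 1 + 1) : Fin (c - 1 + 2)) : ℕ))
      = W ((t - 1) * c + ((0 : Fin (c - 1 + 2)) : ℕ))
    simp only [Fin.val_last, Fin.val_zero, Nat.add_zero, hcc]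
    exact huW ((t - 1) * c)
  · show c - 1 + 1 = Nat.gcd k (n + 1)
    omega
  · rw [htdef, hcdef]
  · -- p = gpow q (t-1)
    have hidx : n = (t - 1) * ((c - 1) + 1) + (c - 1) := by
      rw [hcc]
      have h1 : (t - 1) * c = n + 1 - c := by
        rw [Nat.sub_mul, htc, one_mul]
      rw [h1]; omega
    refine Prod.ext ?_ ?_
    · refine sigma_ext hidx w _ (fun i hi => ?_)
      rw [← hWeq i hi]
      show W i = if i = 0 then u ^ (t - 1) • W ((t - 1) * c + ((0 : Fin (c - 1 + 2)) : ℕ))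
        else u ^ ((t - 1) - (i - 1) / (c - 1 + 1)) •
          W ((t - 1) * c + (i - (i - 1) / (c - 1 + 1) * (c - 1 + 1)))
      rcases Nat.eq_zero_or_pos i with h0 | h0
      · subst h0
        rw [if_pos rfl]
        have hv0 : ((0 : Fin (c - 1 + 2)) : ℕ) = 0 := Fin.val_zero (c - 1 + 1)
        rw [hv0, Nat.add_zero]
        have := hupow (t - 1) 0
        rw [Nat.zero_add] at this
        exact this.symm
      · rw [if_neg (by omega)]
        simp only [hcc]
        obtain ⟨m, hm⟩ : ∃ m, (i - 1) / c = m := ⟨_, rfl⟩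
        rw [hm]
        have hmc : m * c ≤ i - 1 := by rw [← hm]; exact Nat.div_mul_le_self _ _
        have hmt : m < t := by
          rw [← hm]
          refine (Nat.div_lt_iff_lt_mul hc1).mpr ?_
          rw [htc]; omega
        have h5 : (t - 1 - m) * c + m * c = (t - 1) * c := by
          rw [← Nat.add_mul]; congr 1; omega
        have key := hupow (t - 1 - m) i
        have hidx2 : i + (t - 1 - m) * c = (t - 1) * c + (i - m * c) := by
          rw [← h5]
          have harith : ∀ a b : ℕ, b ≤ i - 1 → i + a = a + b + (i - b) := by
            intro a b hb; omega
          exact harith _ _ hmc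
        rw [← key, hidx2]
    · show g = u ^ ((t - 1) + 1)
      rw [show t - 1 + 1 = t by omega, hut]
end

section
/- Let V: D → ℂ be a G-invariant function (V(gu) = V(u) for all g ∈ G, u ∈ D) for a holomorphic IFS with symmetry group G. Then for every 𝐰 = (w, g) ∈ 𝒲^G with relative fixed point u_𝐰 and every h ∈ G, the iterated product satisfies V_{hw}(g_{h𝐰} u_{h𝐰}) = V_w(g u_𝐰), where h𝐰 = (hw, hgh⁻¹) and u_{h𝐰} = h u_𝐰. -/
/-- Index `k` clamped into `Fin (n+2)` (only used for `k ≤ n+1`). -/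
def idx (n k : ℕ) : Fin (n + 2) := ⟨k % (n + 2), Nat.mod_lt _ (Nat.succ_pos _)⟩

/-- `compTo φ w k` is the composition `φ_{w_{0,k}}` of the first `k` maps of the
iterated function scheme along the word `w`. -/
def compTo {S X : Type*} (φ : S → S → X → X) {n : ℕ} (w : Fin (n + 2) → S) :
    ℕ → X → X
  | 0 => id
  | (k + 1) => φ (w (idx n k)) (w (idx n (k + 1))) ∘ compTo φ w k

/-- The iterated product `V_w(u) = ∏_{k=1}^{n_w} V(φ_{w_{0,k}}(u))`. -/
def iterProd {S X : Type*} (φ : S → S → X → X) (V : X → ℂ) {n : ℕ}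
    (w : Fin (n + 2) → S) (u : X) : ℂ :=
  ∏ k ∈ Finset.range (n + 1), V (compTo φ w (k + 1) u)

/-- Proposition 4.2 (G-invariance part): for a `G`-invariant potential `V` of an
IFS with symmetry group `G`, for every `𝐰 = (w,g) ∈ 𝒲^G` with relative fixed
point `u_𝐰` and every `h ∈ G`, `V_{hw}(g_{h𝐰} u_{h𝐰}) = V_w(g u_𝐰)`, where
`h𝐰 = (hw, hgh⁻¹)` and `u_{h𝐰} = h u_𝐰`. -/
theorem iterProd_invariant_under_G_action
    {S G X : Type*} [Group G] [MulAction G S] [MulAction G X]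
    (A : S → S → Prop) (φ : S → S → X → X) (V : X → ℂ)
    (hcomm : ∀ (g : G) (i j : S) (u : X), g • φ i j u = φ (g • i) (g • j) (g • u))
    (hVinv : ∀ (g : G) (u : X), V (g • u) = V u)
    {n : ℕ} (w : Fin (n + 2) → S)
    (hadm : ∀ k : Fin (n + 1), A (w k.castSucc) (w k.succ))
    (g : G) (hclose : g • w (Fin.last (n + 1)) = w 0)
    (u : X) (hfix : compTo φ w (n + 1) (g • u) = u)
    (h : G) :
    iterProd φ V (fun i => h • w i) ((h * g * h⁻¹) • (h • u)) =
      iterProd φ V w (g • u) := by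
  have key : ∀ (k : ℕ) (v : X),
      compTo φ (fun i => h • w i) k (h • v) = h • compTo φ w k v := by
    intro k
    induction k with
    | zero => intro v; rfl
    | succ k ih =>
      intro v
      simp only [compTo, Function.comp_apply, ih, hcomm]
  have hu : (h * g * h⁻¹) • (h • u) = h • (g • u) := by
    rw [← mul_smul, ← mul_smul]
    congr 1
    group
  rw [hu]
  unfold iterProd
  refine Finset.prod_congr rfl fun k _ => ?_
  rw [key, hVinv]
end

section
/- Let m be the order of g in G and 𝐰 = (w,g) ∈ 𝒲^G. Then w^m (the word part of 𝐰^m) is a closed word (its first and last letters coincide), and if (φ_{w^m})'(u_{w^m}) is a positive real number then (φ_w ∘ g)'(u_𝐰) is an m-th root of it in the sense that [(φ_w ∘ g)'(u_𝐰)]^m = (φ_{w^m})'(u_{w^m}). -/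
/-- The word part of the `(k+1)`-fold iterate `𝐰^{k+1}` of `𝐰 = (w,g)`. -/
def powWord {S G : Type*} [Group G] [MulAction G S] {n : ℕ}
    (w : Fin (n + 2) → S) (g : G) (k : ℕ) : Fin (k * (n + 1) + n + 2) → S :=
  fun i =>
    if (i : ℕ) = 0 then g ^ k • w 0
    else g ^ (k - ((i : ℕ) - 1) / (n + 1)) •
      w ⟨(i : ℕ) - ((i : ℕ) - 1) / (n + 1) * (n + 1), by
        have h1 : ((i : ℕ) - 1) % (n + 1) < n + 1 := Nat.mod_lt _ (Nat.succ_pos _)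
        have h2 : ((i : ℕ) - 1) / (n + 1) * (n + 1) + ((i : ℕ) - 1) % (n + 1) =
            (i : ℕ) - 1 := Nat.div_add_mod' _ _
        omega⟩

section Aux

variable {S G : Type*} [Group G] [MulAction G S]

lemma idx_eq {n k : ℕ} (h : k ≤ n + 1) : idx n k = ⟨k, by omega⟩ := by
  simp only [idx, Fin.mk.injEq]
  exact Nat.mod_eq_of_lt (by omega)

lemma powWord_apply {n : ℕ} (w : Fin (n + 2) → S) (g : G) (k j r : ℕ)
    (hj : j ≤ k) (hr1 : 1 ≤ r) (hr : r ≤ n + 1) :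
    powWord w g k (idx (k * (n + 1) + n) (j * (n + 1) + r)) =
      g ^ (k - j) • w ⟨r, by omega⟩ := by
  have hmul : j * (n + 1) ≤ k * (n + 1) := Nat.mul_le_mul_right _ hj
  rw [idx_eq (by omega)]
  have hdiv : (j * (n + 1) + r - 1) / (n + 1) = j := by
    have h1 : j * (n + 1) + r - 1 = (r - 1) + j * (n + 1) := by omega
    rw [h1, Nat.add_mul_div_right _ _ (Nat.succ_pos n), Nat.div_eq_of_lt (by omega),
      Nat.zero_add]
  simp only [powWord]
  rw [if_neg (by simp; omega)]
  simp only [hdiv]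
  exact congrArg₂ _ rfl (congrArg w (Fin.ext (by show j * (n+1) + r - j * (n+1) = r; omega)))

lemma powWord_apply' {n : ℕ} (w : Fin (n + 2) → S) (g : G)
    (hclose : g • w (Fin.last (n + 1)) = w 0) (k j r : ℕ)
    (hj : j ≤ k) (hr : r ≤ n + 1) :
    powWord w g k (idx (k * (n + 1) + n) (j * (n + 1) + r)) =
      g ^ (k - j) • w ⟨r, by omega⟩ := by
  rcases Nat.eq_zero_or_pos r with hr0 | hr1
  · subst hr0
    rcases Nat.eq_zero_or_pos j with hj0 | hj1
    · subst hj0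
      have h0 : 0 * (n + 1) + 0 = 0 := by omega
      rw [h0, idx_eq (by omega)]
      simp only [powWord]
      rw [if_pos trivial, Nat.sub_zero]
      exact congrArg₂ _ rfl (congrArg w (Fin.ext (by simp)))
    · obtain ⟨j', rfl⟩ : ∃ j', j = j' + 1 := ⟨j - 1, by omega⟩
      have h1 : (j' + 1) * (n + 1) + 0 = j' * (n + 1) + (n + 1) := by
        rw [Nat.succ_mul]; omega
      rw [h1, powWord_apply w g k j' (n + 1) (by omega) (by omega) le_rfl]
      have h2 : k - j' = (k - (j' + 1)) + 1 := by omega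
      rw [h2, pow_succ, mul_smul]
      have h3 : (⟨n + 1, by omega⟩ : Fin (n + 2)) = Fin.last (n + 1) := rfl
      rw [h3, hclose]
      exact congrArg₂ _ rfl (congrArg w (Fin.ext (by simp)))
  · exact powWord_apply w g k j r hj hr1 hr

lemma compTo_powWord
    (φ : S → S → ℂ → ℂ) (T : G → ℂ → ℂ)
    (hT1 : ∀ z : ℂ, T 1 z = z)
    (hTmul : ∀ (g h : G) (z : ℂ), T (g * h) z = T g (T h z))
    (hcomm : ∀ (g : G) (i j : S) (z : ℂ), T g (φ i j z) = φ (g • i) (g • j) (T g z))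
    {n : ℕ} (w : Fin (n + 2) → S) (g : G)
    (hclose : g • w (Fin.last (n + 1)) = w 0) (k : ℕ) :
    ∀ j, j ≤ k → ∀ r, r ≤ n + 1 → ∀ z : ℂ,
      compTo φ (powWord w g k) (j * (n + 1) + r) z =
        T (g ^ (k - j)) (compTo φ w r (T g
          ((fun z => compTo φ w (n + 1) (T g z))^[j] (T ((g ^ (k + 1))⁻¹) z)))) := by
  have Tcomp : ∀ (a b : G) (z : ℂ), T a (T b z) = T (a * b) z := fun a b z =>
    (hTmul a b z).symm
  have step : ∀ j, j ≤ k → ∀ r, r ≤ n →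
      (∀ z : ℂ, compTo φ (powWord w g k) (j * (n + 1) + r) z =
        T (g ^ (k - j)) (compTo φ w r (T g
          ((fun z => compTo φ w (n + 1) (T g z))^[j] (T ((g ^ (k + 1))⁻¹) z))))) →
      ∀ z : ℂ, compTo φ (powWord w g k) (j * (n + 1) + (r + 1)) z =
        T (g ^ (k - j)) (compTo φ w (r + 1) (T g
          ((fun z => compTo φ w (n + 1) (T g z))^[j] (T ((g ^ (k + 1))⁻¹) z)))) := by
    intro j hj r hr ih z
    have h1 : j * (n + 1) + (r + 1) = (j * (n + 1) + r) + 1 := by omega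
    rw [h1]
    show φ _ _ (compTo φ (powWord w g k) (j * (n + 1) + r) z) = _
    rw [ih z]
    rw [powWord_apply' w g hclose k j r hj (by omega)]
    have h2 : (j * (n + 1) + r) + 1 = j * (n + 1) + (r + 1) := by omega
    rw [h2, powWord_apply' w g hclose k j (r + 1) hj (by omega)]
    set X := T g ((fun z => compTo φ w (n + 1) (T g z))^[j] (T ((g ^ (k + 1))⁻¹) z)) with hX
    have hRHS : compTo φ w (r + 1) X =
        φ (w ⟨r, by omega⟩) (w ⟨r + 1, by omega⟩) (compTo φ w r X) := by
      show φ (w (idx n r)) (w (idx n (r + 1))) (compTo φ w r X) = _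
      rw [idx_eq (by omega), idx_eq (by omega)]
    rw [hRHS, hcomm]
  intro j
  induction j with
  | zero =>
    intro _ r hr
    induction r with
    | zero =>
      intro z
      have h0 : 0 * (n + 1) + 0 = 0 := by omega
      rw [h0]
      show z = _
      simp only [Function.iterate_zero, id_eq, compTo]
      rw [Tcomp, Tcomp]
      have : g ^ (k - 0) * g * (g ^ (k + 1))⁻¹ = 1 := by
        rw [Nat.sub_zero, ← pow_succ, mul_inv_cancel]
      rw [this, hT1]
    | succ r ihr => exact step 0 (by omega) r (by omega) (ihr (by omega))
  | succ j ihj =>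
    intro hj r hr
    induction r with
    | zero =>
      intro z
      have h1 : (j + 1) * (n + 1) + 0 = j * (n + 1) + (n + 1) := by
        rw [Nat.succ_mul]; omega
      rw [h1, ihj (by omega) (n + 1) le_rfl z]
      rw [Function.iterate_succ_apply']
      have hY : ∀ Y : ℂ, T (g ^ (k - (j + 1))) (T g Y) = T (g ^ (k - j)) Y := by
        intro Y
        rw [Tcomp, ← pow_succ]
        have : k - (j + 1) + 1 = k - j := by omega
        rw [this]
      exact (hY _).symm
    | succ r ihr => exact step (j + 1) hj r (by omega) (ihr (by omega))

lemma compTo_diff {S : Type*} (φ : S → S → ℂ → ℂ)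
    (hφ : ∀ i j : S, Differentiable ℂ (φ i j)) {n : ℕ} (w : Fin (n + 2) → S) :
    ∀ r, Differentiable ℂ (compTo φ w r)
  | 0 => differentiable_id
  | (r + 1) => (hφ _ _).comp (compTo_diff φ hφ w r)

lemma deriv_iterate_fixed (F : ℂ → ℂ) (hF : Differentiable ℂ F) (u : ℂ) (hu : F u = u) :
    ∀ j, deriv (F^[j]) u = (deriv F u) ^ j
  | 0 => by simp
  | (j + 1) => by
    have hdj : Differentiable ℂ (F^[j]) := hF.iterate j
    rw [Function.iterate_succ', pow_succ',
      deriv_comp u (hF.differentiableAt) (hdj.differentiableAt),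
      Function.iterate_fixed hu j, deriv_iterate_fixed F hF u hu j]

end Aux

/-- Lemma 4.7: let `m` be the order of the closing element `g` of
`𝐰 = (w,g) ∈ 𝒲^G`. Then `w^m` is a closed word (first and last letters coincide),
and if `(φ_{w^m})'(u_{w^m})` is a positive real number `c`, then `(φ_w ∘ g)'(u_𝐰)`
is an `m`-th root of it: `[(φ_w ∘ g)'(u_𝐰)]^m = (φ_{w^m})'(u_{w^m})`.
(Here `u_{w^m} = u_𝐰 = u` and `w^m = powWord w g (m-1)`.) -/
theorem word_pow_order_closed_and_deriv_root
    {S G : Type*} [Group G] [MulAction G S]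
    (A : S → S → Prop) (φ : S → S → ℂ → ℂ) (T : G → ℂ → ℂ)
    (hT1 : ∀ z : ℂ, T 1 z = z)
    (hTmul : ∀ (g h : G) (z : ℂ), T (g * h) z = T g (T h z))
    (hcomm : ∀ (g : G) (i j : S) (z : ℂ), T g (φ i j z) = φ (g • i) (g • j) (T g z))
    (hφdiff : ∀ i j : S, Differentiable ℂ (φ i j))
    (hTdiff : ∀ g : G, Differentiable ℂ (T g))
    {n : ℕ} (w : Fin (n + 2) → S)
    (hadm : ∀ k : Fin (n + 1), A (w k.castSucc) (w k.succ))
    (g : G) (hclose : g • w (Fin.last (n + 1)) = w 0)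
    (m : ℕ) (hm : orderOf g = m) (hmpos : 0 < m)
    (u : ℂ) (hfix : compTo φ w (n + 1) (T g u) = u) :
    powWord w g (m - 1) 0 = powWord w g (m - 1) (Fin.last _) ∧
    ∀ c : ℝ, 0 < c →
      deriv (compTo φ (powWord w g (m - 1)) ((m - 1) * (n + 1) + n + 1)) u = (c : ℂ) →
      (deriv (fun z => compTo φ w (n + 1) (T g z)) u) ^ m = (c : ℂ) := by
  have hgm : g ^ m = 1 := by rw [← hm]; exact pow_orderOf_eq_one g
  have hm1 : m - 1 + 1 = m := by omega
  set F : ℂ → ℂ := fun z => compTo φ w (n + 1) (T g z) with hF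
  constructor
  · -- closedness
    have h0 : powWord w g (m - 1) 0 = g ^ (m - 1) • w 0 := by
      simp [powWord]
    have hlast : (Fin.last ((m - 1) * (n + 1) + n + 1) : Fin ((m-1) * (n+1) + n + 2)) =
        idx ((m - 1) * (n + 1) + n) ((m - 1) * (n + 1) + (n + 1)) := by
      rw [idx_eq (by omega)]
      apply Fin.ext
      show (m - 1) * (n + 1) + n + 1 = (m - 1) * (n + 1) + (n + 1)
      omega
    rw [h0, hlast, powWord_apply' w g hclose (m - 1) (m - 1) (n + 1) le_rfl le_rfl,
      Nat.sub_self, pow_zero, one_smul]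
    have h3 : (⟨n + 1, by omega⟩ : Fin (n + 2)) = Fin.last (n + 1) := rfl
    rw [h3, ← hclose, smul_smul, ← pow_succ, hm1, hgm, one_smul]
  · intro c hc hderiv
    have hEq : compTo φ (powWord w g (m - 1)) ((m - 1) * (n + 1) + n + 1) = F^[m] := by
      funext z
      have h1 : (m - 1) * (n + 1) + n + 1 = (m - 1) * (n + 1) + (n + 1) := by omega
      rw [h1, compTo_powWord φ T hT1 hTmul hcomm w g hclose (m - 1) (m - 1) le_rfl
        (n + 1) le_rfl z, Nat.sub_self, pow_zero, hT1, hm1, hgm, inv_one, hT1]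
      show F ((F^[m - 1]) z) = F^[m] z
      rw [← Function.iterate_succ_apply' F (m - 1) z, Nat.succ_eq_add_one, hm1]
    rw [hEq] at hderiv
    have hFdiff : Differentiable ℂ F := (compTo_diff φ hφdiff w (n + 1)).comp (hTdiff g)
    have hFu : F u = u := hfix
    rw [deriv_iterate_fixed F hFdiff u hFu m] at hderiv
    exact hderiv
end
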